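/- arXiv:2404.14069 — 5 statements merged into one kernel-verified Lean document; each statement's English description precedes it below -/
import Mathlib

section
/- For all n-bit signed two's complement integers a with even n, the product a·b equals the sum over i from 0 to n/2−1 of 4^i · B(a_{2i+1}, a_{2i}, a_{2i−1}) · b, where B(x,y,z) = −2x+y+z, a_{−1} = 0, and a = −2^{n−1}a_{n−1} + Σ_{i=0}^{n−2} 2^i a_i. -/
/-- Booth encoding function `B(x,y,z) = -2x + y + z`. -/
def BoothB (x y z : ℤ) : ℤ := -2 * x + y + z

lemma booth_key (a : ℤ → ℤ) (ham1 : a (-1) = 0) : ∀ m : ℕ,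
    (-2 ^ (2*m+1) * a (2*(m:ℤ)+1) + ∑ i ∈ Finset.range (2*m+1), 2 ^ i * a (i : ℤ))
      = ∑ i ∈ Finset.range (m+1),
        4 ^ i * BoothB (a (2 * (i : ℤ) + 1)) (a (2 * (i : ℤ))) (a (2 * (i : ℤ) - 1)) := by
  intro m
  induction m with
  | zero => simp [BoothB, ham1]
  | succ m ih =>
      have h1 : 2*(m+1)+1 = (2*m+1) + 1 + 1 := by ring
      rw [h1, Finset.sum_range_succ, Finset.sum_range_succ,
        Finset.sum_range_succ _ (m+1)]
      simp only [BoothB] at ih ⊢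
      push_cast at ih ⊢
      simp only [show (4:ℤ) = 2^2 by norm_num, ← pow_mul] at ih ⊢
      rw [show 2*((m:ℤ)+1) = 2*(m:ℤ)+2 by ring, show 2*(m:ℤ)+2-1 = 2*(m:ℤ)+1 by ring]
      linear_combination ih

/-- Booth Radix-4 encoding of an `n`-bit two's complement integer `a` (even `n`),
multiplied by an arbitrary integer `b`. -/
theorem booth_radix4_encoding (n : ℕ) (hn : Even n) (hpos : 0 < n)
    (a : ℤ → ℤ) (ha : ∀ i : ℤ, a i = 0 ∨ a i = 1) (ham1 : a (-1) = 0)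
    (b : ℤ) (A : ℤ)
    (hA : A = -2 ^ (n - 1) * a ((n : ℤ) - 1) +
      ∑ i ∈ Finset.range (n - 1), 2 ^ i * a (i : ℤ)) :
    A * b = ∑ i ∈ Finset.range (n / 2),
      4 ^ i * BoothB (a (2 * (i : ℤ) + 1)) (a (2 * (i : ℤ))) (a (2 * (i : ℤ) - 1)) * b := by
  obtain ⟨k, rfl⟩ := hn
  have hk : 0 < k := by omega
  obtain ⟨m, rfl⟩ : ∃ m, k = m + 1 := ⟨k - 1, by omega⟩
  have h1 : (m+1) + (m+1) - 1 = 2*m+1 := by omega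
  have h2 : ((m:ℤ)+1) + ((m:ℤ)+1) - 1 = 2*(m:ℤ)+1 := by ring
  have h3 : ((m+1) + (m+1)) / 2 = m + 1 := by omega
  rw [hA, h3]
  rw [show ((((m+1)+(m+1) : ℕ) : ℤ) - 1) = 2*(m:ℤ)+1 by push_cast; ring, h1]
  rw [booth_key a ham1 m, Finset.sum_mul]
end

section
/- Let k be even, k ≥ 2, and Δ(a,b) = Σ_{i+j < k/2} 4^{i+j}·B(a_{2i+1},a_{2i},a_{2i−1})·B(b_{2j+1},b_{2j},b_{2j−1}) with a_{−1}=b_{−1}=0. If a_i = 1 for all i and b alternates as b_j = 1 iff j is odd (pattern 101...010 from MSB, i.e., b_{2j+1}=1, b_{2j}=0), then Δ(a,b) = (2^k+2)/3. -/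
/-- The `i`-th Booth Radix-4 digit of the bit-vector `a` (bits indexed by `ℤ`,
with the convention that `a (-1) = 0` is imposed as a hypothesis). -/
def BoothDig (a : ℤ → ℤ) (i : ℕ) : ℤ :=
  BoothB (a (2 * (i : ℤ) + 1)) (a (2 * (i : ℤ))) (a (2 * (i : ℤ) - 1))

/-- The truncation error `Δ(a,b)` of a double Booth Radix-4 partial product array:
the sum of `4^(i+j) · B(a_{2i+1},a_{2i},a_{2i-1}) · B(b_{2j+1},b_{2j},b_{2j-1})`
over all `i, j ≥ 0` with `i + j < k/2`. -/
def Delta (k : ℕ) (a b : ℤ → ℤ) : ℤ :=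
  ∑ p ∈ (Finset.range (k / 2) ×ˢ Finset.range (k / 2)).filter
      (fun p => p.1 + p.2 < k / 2),
    4 ^ (p.1 + p.2) * BoothDig a p.1 * BoothDig b p.2

/-- `a` all ones and `b` with pattern `101...010` (bit `j` set iff `j` is odd):
`Δ(a,b) = (2^k + 2)/3`. -/
theorem delta_ones_vs_1010 (k : ℕ) (hk : Even k) (hk2 : 2 ≤ k)
    (a b : ℤ → ℤ) (ham1 : a (-1) = 0) (hbm1 : b (-1) = 0)
    (ha : ∀ i : ℤ, 0 ≤ i → a i = 1) (hb : ∀ j : ℤ, 0 ≤ j → b j = j % 2) :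
    (Delta k a b : ℚ) = (2 ^ k + 2) / 3 := by
  obtain ⟨t, ht⟩ := hk
  set m := k / 2 with hmdef
  clear_value m
  have hm1 : 1 ≤ m := by omega
  have hA0 : BoothDig a 0 = -1 := by
    simp only [BoothDig, BoothB, Nat.cast_zero, mul_zero, zero_add, zero_sub]
    rw [ha 1 (by norm_num), ha 0 le_rfl, ham1]; ring
  have hApos : ∀ i : ℕ, 1 ≤ i → BoothDig a i = 0 := by
    intro i hi
    have : (1:ℤ) ≤ (i:ℤ) := by exact_mod_cast hi
    simp only [BoothDig, BoothB]
    rw [ha _ (by omega), ha _ (by omega), ha _ (by omega)]; ring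
  have hB0 : BoothDig b 0 = -2 := by
    simp only [BoothDig, BoothB, Nat.cast_zero, mul_zero, zero_add, zero_sub]
    rw [hb 1 (by norm_num), hb 0 le_rfl, hbm1]; norm_num
  have hBpos : ∀ j : ℕ, 1 ≤ j → BoothDig b j = -1 := by
    intro j hj
    have h1 : (1:ℤ) ≤ (j:ℤ) := by exact_mod_cast hj
    simp only [BoothDig, BoothB]
    rw [hb _ (by omega), hb _ (by omega), hb _ (by omega)]
    have e1 : (2 * (j:ℤ) + 1) % 2 = 1 := by omega
    have e2 : (2 * (j:ℤ)) % 2 = 0 := by omega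
    have e3 : (2 * (j:ℤ) - 1) % 2 = 1 := by omega
    rw [e1, e2, e3]; ring
  have key : Delta k a b = ∑ j ∈ Finset.range m, 4 ^ j * (-1) * BoothDig b j := by
    unfold Delta
    rw [← hmdef]
    have himg := Finset.sum_image
      (g := fun j : ℕ => ((0, j) : ℕ × ℕ)) (s := Finset.range m)
      (f := fun p : ℕ × ℕ => 4 ^ (p.1 + p.2) * BoothDig a p.1 * BoothDig b p.2)
      (by intro x _ y _ h; simpa using h)
    have hsub : (Finset.range m).image (fun j : ℕ => ((0, j) : ℕ × ℕ)) ⊆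
        (Finset.range m ×ˢ Finset.range m).filter (fun p => p.1 + p.2 < m) := by
      intro p hp
      simp only [Finset.mem_image, Finset.mem_range] at hp
      obtain ⟨j, hj, rfl⟩ := hp
      simp only [Finset.mem_filter, Finset.mem_product, Finset.mem_range]
      exact ⟨⟨by omega, hj⟩, by omega⟩
    rw [← Finset.sum_subset hsub (by
      intro p hp hnp
      simp only [Finset.mem_filter, Finset.mem_product, Finset.mem_range] at hp
      simp only [Finset.mem_image, Finset.mem_range] at hnp
      have hp1 : 1 ≤ p.1 := by
        by_contra h
        refine hnp ⟨p.2, hp.1.2, ?_⟩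
        rw [Prod.ext_iff]
        exact ⟨by omega, rfl⟩
      rw [hApos p.1 hp1]; ring)]
    rw [himg]
    apply Finset.sum_congr rfl
    intro j _
    simp [hA0]
  rw [key]
  obtain ⟨n, rfl⟩ : ∃ n, m = n + 1 := ⟨m - 1, by omega⟩
  rw [Finset.sum_range_succ', hB0]
  have : ∀ j ∈ Finset.range n, 4 ^ (j+1) * (-1) * BoothDig b (j+1) = 4 * 4 ^ j := by
    intro j _; rw [hBpos (j+1) (by omega)]; ring
  rw [Finset.sum_congr rfl this, ← Finset.mul_sum]
  push_cast
  have hgeom : ∑ j ∈ Finset.range n, (4:ℚ) ^ j = (4 ^ n - 1) / 3 := by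
    rw [geom_sum_eq (by norm_num)]; norm_num
  rw [hgeom]
  have hk4 : (2:ℚ) ^ k = 4 ^ (n + 1) := by
    have : k = 2 * (n + 1) := by omega
    rw [this, pow_mul]; norm_num
  rw [hk4]
  field_simp
  ring
end

section
/- Let k be even, k ≥ 2, and Δ(a,b) = Σ_{i+j < k/2} 4^{i+j}·B(a_{2i+1},a_{2i},a_{2i−1})·B(b_{2j+1},b_{2j},b_{2j−1}) with a_{−1}=b_{−1}=0. If a_i = 1 for all i < k and b_j = 1 iff j is even (pattern 010...101), then Δ(a,b) = −(2^k−1)/3. -/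
/-- `a` all ones and `b` with pattern `010...101` (bit `j` set iff `j` is even):
`Δ(a,b) = -(2^k - 1)/3`. -/
theorem delta_ones_vs_0101 (k : ℕ) (hk : Even k) (hk2 : 2 ≤ k)
    (a b : ℤ → ℤ) (ham1 : a (-1) = 0) (hbm1 : b (-1) = 0)
    (ha : ∀ i : ℤ, 0 ≤ i → a i = 1) (hb : ∀ j : ℤ, 0 ≤ j → b j = 1 - j % 2) :
    (Delta k a b : ℚ) = -((2 ^ k - 1) / 3) := by
  set m := k / 2 with hmdef
  have hm : 2 * m = k := by
    obtain ⟨c, rfl⟩ := hk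
    omega
  have hm1 : 1 ≤ m := by omega
  have hA0 : BoothDig a 0 = -1 := by
    unfold BoothDig BoothB
    norm_num
    rw [ha 1 (by norm_num), ha 0 le_rfl, ham1]
    ring
  have hA1 : ∀ i : ℕ, i ≠ 0 → BoothDig a i = 0 := by
    intro i hi
    have hi' : (1 : ℤ) ≤ (i : ℤ) := by exact_mod_cast Nat.one_le_iff_ne_zero.mpr hi
    unfold BoothDig BoothB
    rw [ha _ (by omega), ha _ (by omega), ha _ (by omega)]
    ring
  have hB : ∀ j : ℕ, BoothDig b j = 1 := by
    intro j
    unfold BoothDig BoothB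
    rcases Nat.eq_zero_or_pos j with rfl | hj
    · norm_num
      rw [hb 1 (by norm_num), hb 0 le_rfl, hbm1]
      norm_num
    · have hj' : (1 : ℤ) ≤ (j : ℤ) := by exact_mod_cast hj
      rw [hb _ (by omega), hb _ (by omega), hb _ (by omega)]
      have h1 : (2 * (j : ℤ) + 1) % 2 = 1 := by omega
      have h2 : (2 * (j : ℤ)) % 2 = 0 := by omega
      have h3 : (2 * (j : ℤ) - 1) % 2 = 1 := by omega
      rw [h1, h2, h3]
      ring
  have hD : Delta k a b = -∑ j ∈ Finset.range m, (4 : ℤ) ^ j := by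
    unfold Delta
    rw [← hmdef]
    have step1 : ∀ p ∈ (Finset.range m ×ˢ Finset.range m).filter
        (fun p => p.1 + p.2 < m),
        4 ^ (p.1 + p.2) * BoothDig a p.1 * BoothDig b p.2
          = if p.1 = 0 then -(4 : ℤ) ^ p.2 else 0 := by
      intro p _
      rcases eq_or_ne p.1 0 with h | h
      · simp [h, hA0, hB]
      · simp [h, hA1 p.1 h]
    rw [Finset.sum_congr rfl step1, ← Finset.sum_filter]
    have hset : ((Finset.range m ×ˢ Finset.range m).filter
        (fun p => p.1 + p.2 < m)).filter (fun p => p.1 = 0)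
        = (Finset.range m).image (fun j => ((0 : ℕ), j)) := by
      ext ⟨i, j⟩
      simp only [Finset.mem_filter, Finset.mem_product, Finset.mem_range,
        Finset.mem_image, Prod.mk.injEq]
      constructor
      · rintro ⟨⟨⟨hi, hj⟩, _⟩, rfl⟩
        exact ⟨j, hj, rfl, rfl⟩
      · rintro ⟨x, hx, rfl, rfl⟩
        omega
    rw [hset, Finset.sum_image (by intro x _ y _ h; exact (Prod.mk.injEq _ _ _ _).mp h |>.2)]
    simp [Finset.sum_neg_distrib]
  rw [hD]
  push_cast
  have h4 : ∑ j ∈ Finset.range m, (4 : ℚ) ^ j = (4 ^ m - 1) / (4 - 1) :=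
    geom_sum_eq (by norm_num) m
  rw [h4]
  have : (4 : ℚ) ^ m = 2 ^ k := by
    rw [← hm, pow_mul]
    norm_num
  rw [this]
  norm_num
end

section
/- Let k be even, k ≥ 2, and Δ(a,b) = Σ_{i+j < k/2} 4^{i+j}·B(a_{2i+1},a_{2i},a_{2i−1})·B(b_{2j+1},b_{2j},b_{2j−1}) with a_{−1}=b_{−1}=0. If a_j = b_j = 1−(j mod 2) for all j (pattern 010...101), then Δ(a,b) = ((3k−2)·2^k + 2)/18. -/
open Finset

lemma boothDig_eq_one_of_alternating {a : ℤ → ℤ} (ham1 : a (-1) = 0)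
    (ha : ∀ j : ℤ, 0 ≤ j → a j = 1 - j % 2) (i : ℕ) : BoothDig a i = 1 := by
  have h_below : a (2 * i - 1) = 0 := by
    rcases i.eq_zero_or_pos with rfl | hi
    · simpa using ham1
    · rw [ha _ (by omega)]
      omega
  rw [BoothDig, BoothB, ha _ (by omega), ha _ (by omega), h_below]
  omega

lemma sum_filter_add_lt_eq_sum_antidiagonal {M : Type*} [AddCommMonoid M] (m : ℕ)
    (f : ℕ × ℕ → M) :
    ∑ p ∈ (range m ×ˢ range m).filter (fun p => p.1 + p.2 < m), f p =
      ∑ s ∈ range m, ∑ p ∈ antidiagonal s, f p := by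
  have h_triangle : (range m ×ˢ range m).filter (fun p => p.1 + p.2 < m) =
      (range m).biUnion antidiagonal := by
    ext ⟨i, j⟩
    simp only [mem_filter, mem_product, mem_range, mem_biUnion, HasAntidiagonal.mem_antidiagonal]
    constructor
    · rintro ⟨-, h⟩
      exact ⟨i + j, h, rfl⟩
    · rintro ⟨s, hs, rfl⟩
      omega
  rw [h_triangle, sum_biUnion]
  intro s _ t _ hst
  exact disjoint_left.2 fun p hs ht =>
    hst ((HasAntidiagonal.mem_antidiagonal.1 hs).symm.trans
      (HasAntidiagonal.mem_antidiagonal.1 ht))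

lemma delta_eq_sum_of_boothDig_eq_one {k : ℕ} {a b : ℤ → ℤ} (ha : ∀ i, BoothDig a i = 1)
    (hb : ∀ i, BoothDig b i = 1) :
    Delta k a b = ∑ s ∈ range (k / 2), ((s : ℤ) + 1) * 4 ^ s := by
  rw [Delta, sum_filter_add_lt_eq_sum_antidiagonal]
  refine sum_congr rfl fun s _ => ?_
  rw [sum_congr rfl fun p hp => by
    rw [ha, hb, HasAntidiagonal.mem_antidiagonal.1 hp, mul_one, mul_one]]
  simp [Finset.Nat.card_antidiagonal]

lemma sum_range_succ_mul_four_pow (m : ℕ) :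
    ∑ s ∈ range m, ((s : ℚ) + 1) * 4 ^ s = ((3 * m - 1) * 4 ^ m + 1) / 9 := by
  induction m with
  | zero => norm_num
  | succ n ih =>
    rw [sum_range_succ, ih]
    push_cast
    ring

theorem delta_0101_vs_0101_general (k : ℕ) (hk : Even k)
    (a b : ℤ → ℤ) (ham1 : a (-1) = 0) (hbm1 : b (-1) = 0)
    (ha : ∀ j : ℤ, 0 ≤ j → a j = 1 - j % 2) (hb : ∀ j : ℤ, 0 ≤ j → b j = 1 - j % 2) :
    (Delta k a b : ℚ) = ((3 * (k : ℚ) - 2) * 2 ^ k + 2) / 18 := by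
  obtain ⟨m, rfl⟩ := hk
  rw [delta_eq_sum_of_boothDig_eq_one (boothDig_eq_one_of_alternating ham1 ha)
    (boothDig_eq_one_of_alternating hbm1 hb), show (m + m) / 2 = m by omega]
  push_cast
  rw [sum_range_succ_mul_four_pow, pow_add, ← mul_pow]
  ring

/-- Both `a` and `b` with pattern `010...101` (bit `j` set iff `j` is even):
`Δ(a,b) = ((3k - 2)·2^k + 2)/18`. -/
theorem delta_0101_vs_0101 (k : ℕ) (hk : Even k) (hk2 : 2 ≤ k)
    (a b : ℤ → ℤ) (ham1 : a (-1) = 0) (hbm1 : b (-1) = 0)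
    (ha : ∀ j : ℤ, 0 ≤ j → a j = 1 - j % 2) (hb : ∀ j : ℤ, 0 ≤ j → b j = 1 - j % 2) :
    (Delta k a b : ℚ) = ((3 * (k : ℚ) - 2) * 2 ^ k + 2) / 18 :=
  delta_0101_vs_0101_general k hk a b ham1 hbm1 ha hb
end

section
/- For all even k ≥ 2, both bounds of the previous inequality are attained: there exist bit-vectors a, b and a', b' such that Δ(a,b) equals the upper bound (1/25)(2^k(10k − 5(−1)^{k/2} − 1) + 5 + (−1)^{k/2}) and Δ(a',b') equals the lower bound −(1/25)(2^k(10k + 5(−1)^{k/2} − 1) − 5 + (−1)^{k/2}). Specifically, for k/2 even the maximizer is a = b = pattern 0110 repeated (b_j set iff j ≡ 1,2 mod 4) and the minimizer is a = pattern 1001-repeated against b = pattern 0110-repeated; for k/2 odd the roles use the shifted patterns 100110... and 011001... -/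
/-!
On the pattern `0110 0110 …` every Booth digit is `-2·(-1)^i`; on `1001 1001 …` it is `2·(-1)^i`,
except digit `0`, which is `1` because `a₋₁ = 0`. So all terms of `Δ` on an antidiagonal
`i + j = n` have the same sign `±(-1)^n`, the inner sums are `4(n+1)(-1)^n` resp. `-(4n+2)(-1)^n`,
and `Δ` collapses to an arithmetico-geometric sum with ratio `-4`.
The parity of `k/2` decides which of the two patterns gives the maximum and which the minimum.
-/

open Finset

theorem delta_eq_sum_antidiagonal (k : ℕ) (a b : ℤ → ℤ) :
    Delta k a b = ∑ n ∈ range (k / 2),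
      4 ^ n * ∑ p ∈ antidiagonal n, BoothDig a p.1 * BoothDig b p.2 := by
  unfold Delta
  rw [← sum_fiberwise_of_maps_to (g := fun p : ℕ × ℕ => p.1 + p.2)
    (t := range (k / 2)) (fun p hp => by simpa using (mem_filter.1 hp).2)]
  refine sum_congr rfl fun n hn => ?_
  have hfiber : {p ∈ {p ∈ range (k / 2) ×ˢ range (k / 2) | p.1 + p.2 < k / 2} |
      p.1 + p.2 = n} = antidiagonal n := by
    ext ⟨i, j⟩
    simp only [mem_filter, mem_product, mem_range, HasAntidiagonal.mem_antidiagonal] at hn ⊢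
    omega
  rw [hfiber, mul_sum]
  exact sum_congr rfl fun p hp => by rw [HasAntidiagonal.mem_antidiagonal.1 hp, mul_assoc]

/- `25 = (1 - (-4))^2`: the denominator of an arithmetico-geometric sum with ratio `-4`. -/
theorem delta_eq_of_sum_antidiagonal_eq (k : ℕ) (a b : ℤ → ℤ) (c d : ℤ)
    (h : ∀ n : ℕ, ∑ p ∈ antidiagonal n, BoothDig a p.1 * BoothDig b p.2 = (c * n + d) * (-1) ^ n) :
    25 * Delta k a b =
      5 * d - 4 * c + (4 * c - 5 * d - 5 * c * ((k / 2 : ℕ) : ℤ)) * (-4) ^ (k / 2) := by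
  rw [delta_eq_sum_antidiagonal]
  induction k / 2 with
  | zero => simp
  | succ m ih =>
    rw [sum_range_succ, mul_add, ih, h, pow_succ]
    simp only [neg_pow (4 : ℤ)]
    push_cast
    ring

def bits0110 (j : ℤ) : ℤ := if 0 ≤ j ∧ (j % 4 = 1 ∨ j % 4 = 2) then 1 else 0

def bits1001 (j : ℤ) : ℤ := if 0 ≤ j ∧ (j % 4 = 0 ∨ j % 4 = 3) then 1 else 0

theorem bits0110_eq_zero_or_one (j : ℤ) : bits0110 j = 0 ∨ bits0110 j = 1 := by
  unfold bits0110; split_ifs <;> simp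

theorem bits1001_eq_zero_or_one (j : ℤ) : bits1001 j = 0 ∨ bits1001 j = 1 := by
  unfold bits1001; split_ifs <;> simp

theorem bits0110_neg_one : bits0110 (-1) = 0 := rfl

theorem bits1001_neg_one : bits1001 (-1) = 0 := rfl

theorem boothDig_bits0110 (i : ℕ) : BoothDig bits0110 i = -2 * (-1) ^ i := by
  rcases Nat.even_or_odd i with hi | hi <;>
  · simp only [hi.neg_one_pow, BoothDig, BoothB, bits0110]
    obtain ⟨t, rfl⟩ := hi
    push_cast
    split_ifs <;> omega

/- On `j ≥ 0`, `bits1001` is the complement of `bits0110`, and `B(1-x, 1-y, 1-z) = -B(x, y, z)`;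
only digit `0` reads bit `-1`, where both patterns are `0`. -/
theorem boothDig_bits1001 (i : ℕ) :
    BoothDig bits1001 i = -BoothDig bits0110 i - if i = 0 then 1 else 0 := by
  rw [boothDig_bits0110]
  rcases Nat.even_or_odd i with hi | hi <;>
  · simp only [hi.neg_one_pow, BoothDig, BoothB, bits1001]
    obtain ⟨t, rfl⟩ := hi
    push_cast
    split_ifs <;> omega

theorem sum_antidiagonal_boothDig_bits0110_bits0110 (n : ℕ) :
    ∑ p ∈ antidiagonal n, BoothDig bits0110 p.1 * BoothDig bits0110 p.2 =
      4 * (n + 1) * (-1) ^ n := by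
  have hterm : ∀ p ∈ antidiagonal n,
      BoothDig bits0110 p.1 * BoothDig bits0110 p.2 = 4 * (-1) ^ n := by
    intro p hp
    rw [boothDig_bits0110, boothDig_bits0110, ← HasAntidiagonal.mem_antidiagonal.1 hp, pow_add]
    ring
  rw [sum_congr rfl hterm, sum_const, Nat.card_antidiagonal, nsmul_eq_mul]
  push_cast
  ring

theorem sum_antidiagonal_boothDig_bits1001_bits0110 (n : ℕ) :
    ∑ p ∈ antidiagonal n, BoothDig bits1001 p.1 * BoothDig bits0110 p.2 =
      -(4 * n + 2) * (-1) ^ n := by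
  have hcorner : ∑ p ∈ antidiagonal n, (if p.1 = 0 then BoothDig bits0110 p.2 else 0) =
      BoothDig bits0110 n := by
    rw [Nat.sum_antidiagonal_eq_sum_range_succ_mk]
    simp
  simp only [boothDig_bits1001, sub_mul, neg_mul, ite_mul, one_mul, zero_mul, sum_sub_distrib,
    sum_neg_distrib]
  rw [hcorner, sum_antidiagonal_boothDig_bits0110_bits0110, boothDig_bits0110]
  ring

theorem delta_bounds_attained_general (k : ℕ) (hk : Even k) :
    ∃ a b a' b' : ℤ → ℤ,
      (∀ i : ℤ, a i = 0 ∨ a i = 1) ∧ (∀ i : ℤ, b i = 0 ∨ b i = 1) ∧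
      (∀ i : ℤ, a' i = 0 ∨ a' i = 1) ∧ (∀ i : ℤ, b' i = 0 ∨ b' i = 1) ∧
      a (-1) = 0 ∧ b (-1) = 0 ∧ a' (-1) = 0 ∧ b' (-1) = 0 ∧
      (Delta k a b : ℚ) =
        (1 / 25 : ℚ) * (2 ^ k * (10 * (k : ℚ) - 5 * (-1) ^ (k / 2) - 1)
          + 5 + (-1) ^ (k / 2)) ∧
      (Delta k a' b' : ℚ) =
        -(1 / 25 : ℚ) * (2 ^ k * (10 * (k : ℚ) + 5 * (-1) ^ (k / 2) - 1)
          - 5 + (-1) ^ (k / 2)) := by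
  obtain ⟨m, rfl⟩ := hk
  have hm : (m + m) / 2 = m := by omega
  have h0110 := congrArg (Int.cast : ℤ → ℚ) (delta_eq_of_sum_antidiagonal_eq (m + m)
    bits0110 bits0110 4 4 fun n => by rw [sum_antidiagonal_boothDig_bits0110_bits0110]; ring)
  have h1001 := congrArg (Int.cast : ℤ → ℚ) (delta_eq_of_sum_antidiagonal_eq (m + m)
    bits1001 bits0110 (-4) (-2) fun n => by rw [sum_antidiagonal_boothDig_bits1001_bits0110]; ring)
  have h2 : (2 : ℚ) ^ (m + m) = 4 ^ m := by rw [← two_mul, pow_mul]; norm_num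
  push_cast [hm, neg_pow (4 : ℚ)] at h0110 h1001 ⊢
  rw [h2]
  rcases neg_one_pow_eq_or ℚ m with hs | hs <;> rw [hs] at h0110 h1001 ⊢
  · refine ⟨bits1001, bits0110, bits0110, bits0110, bits1001_eq_zero_or_one,
      bits0110_eq_zero_or_one, bits0110_eq_zero_or_one, bits0110_eq_zero_or_one,
      bits1001_neg_one, bits0110_neg_one, bits0110_neg_one, bits0110_neg_one, ?_, ?_⟩
    · linear_combination h1001 / 25
    · linear_combination h0110 / 25
  · refine ⟨bits0110, bits0110, bits1001, bits0110, bits0110_eq_zero_or_one,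
      bits0110_eq_zero_or_one, bits1001_eq_zero_or_one, bits0110_eq_zero_or_one,
      bits0110_neg_one, bits0110_neg_one, bits1001_neg_one, bits0110_neg_one, ?_, ?_⟩
    · linear_combination h0110 / 25
    · linear_combination h1001 / 25

/-- Both bounds on the double Booth Radix-4 truncation error are attained: there
exist bit-vectors `a, b` achieving the upper bound and `a', b'` achieving the
lower bound. -/
theorem delta_bounds_attained (k : ℕ) (hk : Even k) (hk2 : 2 ≤ k) :
    ∃ a b a' b' : ℤ → ℤ,
      (∀ i : ℤ, a i = 0 ∨ a i = 1) ∧ (∀ i : ℤ, b i = 0 ∨ b i = 1) ∧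
      (∀ i : ℤ, a' i = 0 ∨ a' i = 1) ∧ (∀ i : ℤ, b' i = 0 ∨ b' i = 1) ∧
      a (-1) = 0 ∧ b (-1) = 0 ∧ a' (-1) = 0 ∧ b' (-1) = 0 ∧
      (Delta k a b : ℚ) =
        (1 / 25 : ℚ) * (2 ^ k * (10 * (k : ℚ) - 5 * (-1) ^ (k / 2) - 1)
          + 5 + (-1) ^ (k / 2)) ∧
      (Delta k a' b' : ℚ) =
        -(1 / 25 : ℚ) * (2 ^ k * (10 * (k : ℚ) + 5 * (-1) ^ (k / 2) - 1)
          - 5 + (-1) ^ (k / 2)) :=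
  delta_bounds_attained_general k hk
end
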